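/- arXiv:1903.08765 — 2 statements merged into one kernel-verified Lean document; each statement's English description precedes it below -/
import Mathlib

section
/- For any group B and integer p ≥ 2, the commutator width of the wreath product B ≀ C_p satisfies cw(B ≀ C_p) ≤ max(1, cw(B)). -/
/-! An element `g` of the commutator subgroup of `B ≀ C_p` has the form `(f, 1)`, and the ordered
product `f 0 * f 1 * ⋯ * f (p - 1)` lies in `[B, B]`, since modulo `[B, B]` it is a homomorphism on
the whole wreath product. Write it as `⁅a, b⁆ * c` with `c` a product of at most `max 1 n - 1`
commutators. For `u i = (f 0 * ⋯ * f (i - 1))⁻¹ * a` and `v` equal to `b` at `-1` and to `1`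
elsewhere, the commutator `⁅(u, 1), (v, -1)⁆` agrees with `g` except at the coordinate `-1`, where
`g` has the extra factor `c`. Placing `c` at that coordinate is a homomorphism `B →* B ≀ C_p`, so
`g` is a product of at most `max 1 n` commutators. -/

/-- The cyclic shift action of `C_p = ZMod p` on the direct power `B^p`. -/
def cycShift (B : Type*) [Group B] (p : ℕ) :
    Multiplicative (ZMod p) →* MulAut (ZMod p → B) where
  toFun k := MulEquiv.arrowCongr (Equiv.addRight (Multiplicative.toAdd k)) (MulEquiv.refl B)
  map_one' := by
    ext f i
    simp [MulEquiv.arrowCongr]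
    rfl
  map_mul' a b := by
    ext f i
    simp only [MulEquiv.arrowCongr, Equiv.coe_addRight, MulEquiv.coe_mk, Equiv.coe_fn_mk,
      MulEquiv.refl_apply, toAdd_mul, MulAut.mul_apply]
    congr 1
    simp only [Equiv.addRight_symm, Equiv.coe_addRight]
    abel

/-- The permutational wreath product `B ≀ C_p` with `C_p` acting on `p` points by cyclic shift. -/
abbrev Wr (B : Type*) [Group B] (p : ℕ) : Type _ :=
  (ZMod p → B) ⋊[cycShift B p] Multiplicative (ZMod p)

open scoped commutatorElement

/-- `cw(G) ≤ n`: every element of the commutator subgroup of `G` is a product of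
at most `n` commutators. -/
def CwLE (G : Type*) [Group G] (n : ℕ) : Prop :=
  ∀ g ∈ commutator G, ∃ l : List (G × G), l.length ≤ n ∧ g = (l.map fun q => ⁅q.1, q.2⁆).prod

namespace ZMod

variable {n : ℕ} [NeZero n]

lemma val_neg_one_add_one : (-1 : ZMod n).val + 1 = n := by
  obtain ⟨m, rfl⟩ := Nat.exists_eq_succ_of_ne_zero (NeZero.ne n)
  rw [val_neg_one]

lemma val_add_one_of_ne_neg_one {i : ZMod n} (hi : i ≠ -1) : (i + 1).val = i.val + 1 := by
  have hlt : i.val + 1 < n := by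
    refine lt_of_le_of_ne i.val_lt ?_
    intro h
    refine hi (eq_neg_of_add_eq_zero_left ?_)
    rw [← natCast_zmod_val i, ← Nat.cast_add_one, h, natCast_self]
  rw [← val_cast_of_lt hlt, Nat.cast_add_one, natCast_zmod_val]

lemma prod_range_natCast {M : Type*} [CommMonoid M] (F : ZMod n → M) :
    ∏ j ∈ Finset.range n, F j = ∏ i, F i :=
  Finset.prod_nbij (↑) (by simp) (fun a ha b hb h => by
      simpa [val_cast_of_lt (Finset.mem_range.mp ha), val_cast_of_lt (Finset.mem_range.mp hb)]
        using congrArg val h)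
    (fun i _ => ⟨i.val, by simp [val_lt], natCast_zmod_val i⟩) (fun _ _ => rfl)

end ZMod

section Commutators

variable {G H : Type*} [Group G] [Group H]

lemma map_list_prod_commutatorElement (φ : G →* H) (l : List (G × G)) :
    φ (l.map fun q => ⁅q.1, q.2⁆).prod
      = ((l.map (Prod.map φ φ)).map fun q => ⁅q.1, q.2⁆).prod := by
  simp [map_list_prod, Function.comp_def, map_commutatorElement]

lemma exists_commutatorElement_mul_list_prod (l : List (G × G)) :
    ∃ (a b : G) (l' : List (G × G)), l'.length + 1 ≤ max 1 l.length ∧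
      (l.map fun q => ⁅q.1, q.2⁆).prod = ⁅a, b⁆ * (l'.map fun q => ⁅q.1, q.2⁆).prod := by
  rcases l with _ | ⟨⟨a, b⟩, l'⟩
  · exact ⟨1, 1, [], by simp, by simp⟩
  · exact ⟨a, b, l', by simp, by simp⟩

end Commutators

section CycShift

variable {B : Type*} [Group B] {p : ℕ}

@[simp]
lemma cycShift_apply (k : Multiplicative (ZMod p)) (f : ZMod p → B) (i : ZMod p) :
    cycShift B p k f i = f (i - k.toAdd) := by
  simp [cycShift, MulEquiv.arrowCongr, sub_eq_add_neg]

@[simp]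
lemma cycShift_symm_apply (k : Multiplicative (ZMod p)) (f : ZMod p → B) (i : ZMod p) :
    (cycShift B p k).symm f i = f (i + k.toAdd) := by
  simp [cycShift, MulEquiv.arrowCongr]

end CycShift

namespace Wr

open SemidirectProduct

variable {B : Type*} [Group B] {p : ℕ}

lemma commutatorElement_inl_mk (u v : ZMod p → B) :
    ⁅(inl u : Wr B p), (⟨v, Multiplicative.ofAdd (-1)⟩ : Wr B p)⁆
      = inl fun i => u i * v i * (u (i + 1))⁻¹ * (v i)⁻¹ := by
  rw [commutatorElement_def]
  ext i <;> simp [mul_assoc]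

lemma eq_inl_left_of_mem_commutator {g : Wr B p} (hg : g ∈ commutator (Wr B p)) :
    g = inl g.left := by
  have hright : g.right = 1 := Abelianization.commutator_subset_ker (rightHom : Wr B p →* _) hg
  ext <;> simp [hright]

def orderedProd (f : ZMod p → B) (j : ℕ) : B :=
  ((List.range j).map fun i : ℕ => f i).prod

@[simp]
lemma orderedProd_zero (f : ZMod p → B) : orderedProd f 0 = 1 := rfl

lemma orderedProd_succ (f : ZMod p → B) (j : ℕ) :
    orderedProd f (j + 1) = orderedProd f j * f j :=
  List.prod_range_succ _ _

lemma of_orderedProd (f : ZMod p → B) (j : ℕ) :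
    Abelianization.of (orderedProd f j) = ∏ k ∈ Finset.range j, Abelianization.of (f k) := by
  induction j with
  | zero => rfl
  | succ j ih => rw [orderedProd_succ, map_mul, ih, Finset.prod_range_succ]

variable [NeZero p]

lemma orderedProd_val_add_one (f : ZMod p → B) (i : ZMod p) :
    orderedProd f (i.val + 1) = orderedProd f i.val * f i := by
  rw [orderedProd_succ, ZMod.natCast_zmod_val]

lemma orderedProd_eq_mul_apply_neg_one (f : ZMod p → B) :
    orderedProd f p = orderedProd f (-1 : ZMod p).val * f (-1) := by
  rw [← orderedProd_val_add_one, ZMod.val_neg_one_add_one]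

lemma exists_inl_eq_commutatorElement_mul {f : ZMod p → B} {a b c : B}
    (hf : orderedProd f p = ⁅a, b⁆ * c) :
    ∃ x y : Wr B p, inl f = ⁅x, y⁆ * inl (Pi.mulSingle (-1) c) := by
  refine ⟨inl fun i => (orderedProd f i.val)⁻¹ * a,
    ⟨Pi.mulSingle (-1) b, Multiplicative.ofAdd (-1)⟩, ?_⟩
  rw [commutatorElement_inl_mk, ← map_mul]
  congr 1
  refine funext fun i => ?_
  rw [Pi.mul_apply]
  rcases eq_or_ne i (-1) with rfl | hi
  · have hc : c = ⁅a, b⁆⁻¹ * (orderedProd f (-1 : ZMod p).val * f (-1)) := by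
      rw [← orderedProd_eq_mul_apply_neg_one, hf, inv_mul_cancel_left]
    simp only [Pi.mulSingle_eq_same, neg_add_cancel, ZMod.val_zero, orderedProd_zero, inv_one,
      one_mul, hc, commutatorElement_def]
    group
  · simp [Pi.mulSingle_eq_of_ne hi, ZMod.val_add_one_of_ne_neg_one hi, orderedProd_val_add_one]

def toAbelianization : Wr B p →* Abelianization B :=
  lift (∏ i, Abelianization.of.comp (Pi.evalMonoidHom (fun _ => B) i)) 1 fun k => by
    ext f
    simpa [MonoidHom.finsetProd_apply] using
      Equiv.prod_comp (Equiv.subRight k.toAdd) fun i => Abelianization.of (f i)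

lemma toAbelianization_apply (g : Wr B p) :
    toAbelianization g = ∏ i, Abelianization.of (g.left i) := by
  simp [toAbelianization, lift]

lemma orderedProd_mem_commutator {g : Wr B p} (hg : g ∈ commutator (Wr B p)) :
    orderedProd g.left p ∈ commutator B := by
  rw [← Abelianization.ker_of, MonoidHom.mem_ker, of_orderedProd,
    ZMod.prod_range_natCast fun i => Abelianization.of (g.left i), ← toAbelianization_apply]
  exact Abelianization.commutator_subset_ker _ hg

end Wr

/-- for any group `B` and integer `p ≥ 2`,
`cw(B ≀ C_p) ≤ max 1 (cw B)`. -/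
theorem cw_wreath_le (B : Type*) [Group B] (p : ℕ) (hp : 2 ≤ p) (n : ℕ) (hB : CwLE B n) :
    CwLE (Wr B p) (max 1 n) := by
  have : NeZero p := ⟨by omega⟩
  intro g hg
  obtain ⟨l, hl, hprod⟩ := hB _ (Wr.orderedProd_mem_commutator hg)
  obtain ⟨a, b, l', hl', hsplit⟩ := exists_commutatorElement_mul_list_prod l
  obtain ⟨x, y, hxy⟩ := Wr.exists_inl_eq_commutatorElement_mul (hprod.trans hsplit)
  let ι : B →* Wr B p :=
    SemidirectProduct.inl.comp (MonoidHom.mulSingle (fun _ : ZMod p => B) (-1))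
  refine ⟨(x, y) :: l'.map (Prod.map ι ι), ?_, ?_⟩
  · simp only [List.length_cons, List.length_map]
    omega
  · rw [Wr.eq_inl_left_of_mem_commutator hg, hxy, List.map_cons, List.prod_cons,
      ← map_list_prod_commutatorElement]
    rfl
end

section
/- For B_k the k-fold iterated wreath product of C_2 (k ≥ 1), the square of every element of B_k lies in the commutator subgroup B_k'; consequently B_k^2 ⊆ B_k', and since also B_k' ⊆ B_k^2 always holds (for the subgroup generated by squares), the subgroup generated by squares of B_k equals B_k'. -/
/-- `BBgrp k` is the group `B_{k+1}`, the `(k+1)`-fold iterated wreath product of `C_2`: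
`BBgrp 0 = C_2` and `BBgrp (k+1) = BBgrp k ≀ C_2`.  It is (isomorphic to) a Sylow
2-subgroup of `S_{2^(k+1)}`. -/
def BBgrp : ℕ → GrpCat
  | 0 => GrpCat.of (Multiplicative (ZMod 2))
  | k + 1 => GrpCat.of (Wr (BBgrp k) 2)

/-- `GGset k` is the subset `G_{k+1}` of `B_{k+1} = BBgrp k`: `GGset 0 = {1}` and
`GGset (k+1) = {(g₁,g₂)π : g₁ * g₂ ∈ GGset k}`. -/
def GGset : (k : ℕ) → Set (BBgrp k)
  | 0 => {1}
  | k + 1 => {x : Wr (BBgrp k) 2 | x.left 0 * x.left 1 ∈ GGset k}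

/-!
By induction on `k`: in `C_2` every square is trivial, and if every square of `B` lies in `B'`,
the same holds in `W = B ≀ C_2`. Indeed the square of `(f, t)` is the base element
`(f · t•f, 1)`, and a base element `(u, 1)` lies in `W'` as soon as `u 0 * u 1 ∈ B'`, because
`(a, a⁻¹)` is the commutator of `(a, 1)` with the swap, and `((1, u 0 * u 1), 1)` lies in the
image of `B'`. Here `u 0 * u 1` is `f₀² f₁²` or `f₀ f₁² f₀`, both in `B'`. The reverse inclusion
`G' ≤ G²` holds in every group, as `⁅g, h⁆ = (gh)² (h⁻¹g⁻¹h)² (h⁻¹)²`.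
-/

open scoped commutatorElement

section Squares

variable {G : Type*} [Group G]

lemma commutatorElement_eq_sq_mul_sq_mul_sq (g h : G) :
    ⁅g, h⁆ = (g * h) ^ 2 * (h⁻¹ * g⁻¹ * h) ^ 2 * h⁻¹ ^ 2 := by
  simp only [commutatorElement_def, pow_two, mul_assoc, mul_inv_cancel_left]

lemma commutator_le_closure_sq :
    commutator G ≤ Subgroup.closure {x : G | ∃ g : G, x = g ^ 2} := by
  have sq_mem (a : G) : a ^ 2 ∈ Subgroup.closure {x : G | ∃ g : G, x = g ^ 2} :=
    Subgroup.subset_closure ⟨a, rfl⟩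
  rw [commutator_def, Subgroup.commutator_le]
  intro g _ h _
  rw [commutatorElement_eq_sq_mul_sq_mul_sq]
  exact Subgroup.mul_mem _ (Subgroup.mul_mem _ (sq_mem _) (sq_mem _)) (sq_mem _)

lemma closure_sq_eq_commutator (h : ∀ g : G, g ^ 2 ∈ commutator G) :
    Subgroup.closure {x : G | ∃ g : G, x = g ^ 2} = commutator G :=
  le_antisymm (Subgroup.closure_le _ |>.mpr fun _ ⟨g, hg⟩ => hg ▸ h g)
    commutator_le_closure_sq

lemma mul_sq_mul_mem_commutator (h : ∀ g : G, g ^ 2 ∈ commutator G) (a b : G) :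
    a * b ^ 2 * a ∈ commutator G := by
  have hconj : a * b ^ 2 * a⁻¹ ∈ commutator G :=
    Subgroup.Normal.conj_mem inferInstance _ (h b) a
  simpa [pow_two, mul_assoc] using Subgroup.mul_mem _ hconj (h a)

lemma map_mem_commutator {H : Type*} [Group H] (f : G →* H) {x : G}
    (hx : x ∈ commutator G) : f x ∈ commutator H := by
  refine SetLike.le_def.mp ?_ (Subgroup.mem_map_of_mem f hx)
  rw [commutator_def, Subgroup.map_commutator]
  exact Subgroup.commutator_mono le_top le_top

end Squares

lemma ZMod.eq_zero_or_eq_one (s : ZMod 2) : s = 0 ∨ s = 1 := by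
  revert s
  decide

namespace Wr

variable {B : Type*} [Group B]

lemma cycShift_two_apply (t : Multiplicative (ZMod 2)) (f : ZMod 2 → B) (i : ZMod 2) :
    cycShift B 2 t f i = f (i - Multiplicative.toAdd t) := by
  show f ((Equiv.addRight (Multiplicative.toAdd t)).symm i) = _
  simp [Equiv.addRight_symm, sub_eq_add_neg]

lemma mk_mul_mk_one (u v : ZMod 2 → B) :
    (⟨u, 1⟩ : Wr B 2) * ⟨v, 1⟩ = ⟨u * v, 1⟩ := by
  refine SemidirectProduct.ext ?_ (mul_one 1)
  show u * cycShift B 2 1 v = u * v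
  rw [map_one]
  rfl

lemma sq_eq_mk (g : Wr B 2) :
    g ^ 2 = ⟨g.left * cycShift B 2 g.right g.left, 1⟩ := by
  have hright : g.right * g.right = 1 := by
    generalize g.right = t
    revert t
    decide
  rw [pow_two]
  exact SemidirectProduct.ext rfl hright

lemma mk_inv_mem_commutator (a : B) :
    (⟨fun i => if i = 0 then a else a⁻¹, 1⟩ : Wr B 2) ∈ commutator (Wr B 2) := by
  have hcomm : (⟨fun i => if i = 0 then a else a⁻¹, 1⟩ : Wr B 2)
      = ⁅(⟨Pi.mulSingle 0 a, 1⟩ : Wr B 2), (⟨1, Multiplicative.ofAdd 1⟩ : Wr B 2)⁆ := by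
    refine SemidirectProduct.ext ?_ ?_
    · funext i
      rcases ZMod.eq_zero_or_eq_one i with rfl | rfl <;>
        simp [commutatorElement_def, SemidirectProduct.mul_left, SemidirectProduct.inv_left,
          SemidirectProduct.inv_right, cycShift_two_apply, Pi.mulSingle]
    · simp [commutatorElement_def, SemidirectProduct.mul_right]
  rw [hcomm, commutator_def]
  exact Subgroup.commutator_mem_commutator (Subgroup.mem_top _) (Subgroup.mem_top _)

lemma mk_one_mem_commutator {f : ZMod 2 → B} (hf : f 0 * f 1 ∈ commutator B) :
    (⟨f, 1⟩ : Wr B 2) ∈ commutator (Wr B 2) := by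
  have hdecomp : (⟨f, 1⟩ : Wr B 2)
      = ⟨fun i => if i = 0 then f 0 else (f 0)⁻¹, 1⟩
        * SemidirectProduct.inl (MonoidHom.mulSingle (fun _ : ZMod 2 => B) 1 (f 0 * f 1)) := by
    rw [SemidirectProduct.inl, MonoidHom.coe_mk, OneHom.coe_mk, mk_mul_mk_one]
    refine SemidirectProduct.ext ?_ rfl
    funext i
    rcases ZMod.eq_zero_or_eq_one i with rfl | rfl <;> simp [Pi.mulSingle]
  rw [hdecomp]
  exact Subgroup.mul_mem _ (mk_inv_mem_commutator (f 0))
    (map_mem_commutator _ (map_mem_commutator _ hf))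

theorem sq_mem_commutator (hB : ∀ b : B, b ^ 2 ∈ commutator B) (g : Wr B 2) :
    g ^ 2 ∈ commutator (Wr B 2) := by
  rw [sq_eq_mk]
  apply mk_one_mem_commutator
  simp only [Pi.mul_apply, cycShift_two_apply]
  rcases ZMod.eq_zero_or_eq_one (Multiplicative.toAdd g.right) with ht | ht <;> rw [ht]
  · simpa [pow_two, mul_assoc] using Subgroup.mul_mem _ (hB (g.left 0)) (hB (g.left 1))
  · simpa [pow_two, mul_assoc] using mul_sq_mul_mem_commutator hB (g.left 0) (g.left 1)

end Wr

lemma BBgrp.sq_mem_commutator (k : ℕ) (g : BBgrp k) : g ^ 2 ∈ commutator (BBgrp k) := by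
  induction k with
  | zero =>
    have hsq : ∀ x : Multiplicative (ZMod 2), x ^ 2 = 1 := by decide
    rw [show g ^ 2 = 1 from hsq g]
    exact Subgroup.one_mem _
  | succ k ih => exact Wr.sq_mem_commutator ih g

/-- in `B_k` every square lies in the commutator subgroup, and hence the
subgroup generated by squares equals the commutator subgroup
(indexing: `BBgrp k` is `B_{k+1}`, `k ≥ 0`). -/
theorem BB_sq_eq_commutator (k : ℕ) :
    (∀ g : BBgrp k, g ^ 2 ∈ commutator (BBgrp k)) ∧
      Subgroup.closure {x : BBgrp k | ∃ g : BBgrp k, x = g ^ 2} = commutator (BBgrp k) :=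
  ⟨BBgrp.sq_mem_commutator k, closure_sq_eq_commutator (BBgrp.sq_mem_commutator k)⟩
end
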